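/- arXiv:2506.23242 — 2 statements merged into one kernel-verified Lean document; each statement's English description precedes it below -/
import Mathlib

section
/- For T > 0 and complex σ not of the form -j·n·(2π/T) for any integer n, 1/(e^{σT} - 1) = (1/T)·∑_{n=-∞}^{∞} 1/(σ + j·n·(2π/T)) - 1/2, where the sum is the symmetric principal value. -/
/-!
With `w = σT / (2πi)` the `n`-th term is `(1 / (2πi)) · 1 / (w + n)`, so by the Mittag-Leffler
expansion of the cotangent the symmetric partial sums tend to `π cot (πw) / (2πi)`. Writing the
cotangent through `e^{2πiw} = e^{σT}` turns this into `1 / (e^{σT} - 1) + 1 / 2`.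
-/

open Complex Filter Finset Real

lemma Finset.sum_Icc_neg_eq_add_sum_range {M : Type*} [AddCommGroup M] (f : ℤ → M) (N : ℕ) :
    ∑ m ∈ Icc (-N : ℤ) N, f m = f 0 + ∑ j ∈ range N, (f (-(j + 1)) + f (j + 1)) := by
  induction N with
  | zero => simp
  | succ N ih =>
    rw [Nat.cast_succ, sum_Icc_succ_eq_add_endpoints, ih, sum_range_succ]
    abel

lemma Complex.tendsto_sum_Icc_one_div_add_intCast {x : ℂ} (hx : x ∈ integerComplement) :
    Tendsto (fun N : ℕ => ∑ n ∈ Icc (-N : ℤ) N, 1 / (x + n)) atTop (nhds (π * cot (π * x))) := by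
  have hsum (N : ℕ) : ∑ n ∈ Icc (-N : ℤ) N, 1 / (x + n) = 1 / x + ∑ j ∈ range N, cotTerm x j := by
    rw [sum_Icc_neg_eq_add_sum_range]
    push_cast
    simp only [add_zero, cotTerm, ← sub_eq_add_neg, add_comm (1 / (x - _))]
  simp_rw [hsum]
  simpa using (tendsto_logDeriv_euler_cot_sub hx).const_add (1 / x)

lemma Complex.pi_mul_cot_pi_mul_div_two_pi_I {w : ℂ} (hw : w ∈ integerComplement) :
    π * cot (π * w) / (2 * π * I) = 1 / (exp (2 * π * I * w) - 1) + 1 / 2 := by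
  have h2πI : (2 * π * I : ℂ) ≠ 0 := by simp [pi_ne_zero, I_ne_zero]
  have hexp : 1 - exp (2 * π * I * w) ≠ 0 := by
    rw [sub_ne_zero, ne_comm, Ne, exp_eq_one_iff]
    rintro ⟨n, hn⟩
    exact hw ⟨n, mul_left_cancel₀ h2πI (by rw [hn]; ring)⟩
  have hexp' : exp (2 * π * I * w) - 1 ≠ 0 := by rwa [← neg_sub, neg_ne_zero]
  rw [cot_pi_eq_exp_ratio]
  generalize exp (2 * π * I * w) = E at *
  field_simp
  ring_nf
  simp only [I_sq]
  ring

theorem kernel_expansion (T : ℝ) (hT : 0 < T) (σ : ℂ)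
    (hσ : ∀ n : ℤ, σ ≠ -Complex.I * n * (2 * π / T)) :
    Filter.Tendsto
      (fun N : ℕ =>
        (1 / (T : ℂ)) * ∑ n ∈ Finset.Icc (-(N : ℤ)) (N : ℤ),
          1 / (σ + Complex.I * n * (2 * π / T)))
      Filter.atTop
      (nhds (1 / (Complex.exp (σ * T) - 1) + 1 / 2)) := by
  have hT0 : (T : ℂ) ≠ 0 := ofReal_ne_zero.mpr hT.ne'
  have h2πI : (2 * π * I : ℂ) ≠ 0 := by simp [pi_ne_zero, I_ne_zero]
  set w : ℂ := σ * T / (2 * π * I) with hw_def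
  have hw : w ∈ integerComplement := by
    rintro ⟨m, hm⟩
    refine hσ (-m) ?_
    rw [hw_def, eq_div_iff h2πI] at hm
    field_simp
    push_cast
    linear_combination -hm
  have hterm (n : ℤ) :
      1 / (T : ℂ) * (1 / (σ + I * n * (2 * π / T))) = 1 / (2 * π * I) * (1 / (w + n)) := by
    rw [hw_def]
    field_simp
  have hlim : 1 / (2 * π * I) * (π * cot (π * w)) = 1 / (exp (σ * T) - 1) + 1 / 2 := by
    rw [one_div_mul_eq_div, pi_mul_cot_pi_mul_div_two_pi_I hw, hw_def, mul_div_cancel₀ _ h2πI]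
  simp_rw [mul_sum, hterm, ← mul_sum, ← hlim]
  exact (tendsto_sum_Icc_one_div_add_intCast hw).const_mul _
end

section
/- Let A be a complex n×n matrix with distinct eigenvalues λ₁,…,λ_q, and let P_j be the spectral (Riesz) projections, with m_j the index of λ_j (i.e., ((A-λ_jI)P_j)^{m_j} = 0 and ((A-λ_jI)P_j)^{m_j-1} ≠ 0). Then for every s not an eigenvalue of A, (sI - A)^{-1} = ∑_{j=1}^{q} ∑_{r=1}^{m_j} (A - λ_jI)^{r-1} P_j / (s - λ_j)^r. -/
/-!
With `N = A - λ_j I` and `c = s - λ_j`, we have `sI - A = c (1 - N / c)`, so `sI - A` times the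
`j`-th inner sum is a finite geometric series in `N / c` and telescopes to
`P_j - c^{-m_j} N^{m_j} P_j`. The error term vanishes because `N^{m_j} P_j = (N P_j)^{m_j} P_j`,
`P_j` being an idempotent commuting with `N`. Summing over `j` gives `∑ P_j = I`.
-/

open Finset

theorem IsIdempotentElem.mul_pow_mul_self {R : Type*} [Monoid R] {a p : R}
    (hp : IsIdempotentElem p) (hap : Commute a p) (k : ℕ) :
    (a * p) ^ k * p = a ^ k * p := by
  rw [hap.mul_pow, mul_assoc, ← pow_succ, hp.pow_succ_eq]

theorem sub_mul_sum_inv_pow_smul_pow {K R : Type*} [Field K] [Ring R] [Algebra K R]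
    {c : K} (hc : c ≠ 0) (N : R) (m : ℕ) :
    (c • 1 - N) * ∑ r ∈ range m, (c ^ (r + 1))⁻¹ • N ^ r = 1 - (c ^ m)⁻¹ • N ^ m := by
  have hfactor : c • (1 : R) - N = c • (1 - c⁻¹ • N) := by
    rw [smul_sub, smul_smul, mul_inv_cancel₀ hc, one_smul]
  have hsum : ∑ r ∈ range m, (c ^ (r + 1))⁻¹ • N ^ r = c⁻¹ • ∑ r ∈ range m, (c⁻¹ • N) ^ r := by
    rw [smul_sum]
    refine sum_congr rfl fun r _ => ?_
    rw [smul_pow, smul_smul, ← pow_succ', inv_pow]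
  rw [hfactor, hsum, smul_mul_smul_comm, mul_inv_cancel₀ hc, one_smul, mul_neg_geom_sum,
    smul_pow, inv_pow]

theorem sub_mul_sum_inv_pow_smul_pow_mul {K R : Type*} [Field K] [Ring R] [Algebra K R]
    {c : K} (hc : c ≠ 0) {N p : R} {m : ℕ} (hN : N ^ m * p = 0) :
    (c • 1 - N) * ∑ r ∈ range m, (c ^ (r + 1))⁻¹ • (N ^ r * p) = p := by
  simp_rw [← smul_mul_assoc, ← sum_mul, ← mul_assoc, sub_mul_sum_inv_pow_smul_pow hc,
    sub_mul, smul_mul_assoc, hN, smul_zero, one_mul, sub_zero]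

theorem resolvent_partial_fraction_expansion_general {n q : ℕ}
    (A : Matrix (Fin n) (Fin n) ℂ)
    (lam : Fin q → ℂ)
    (P : Fin q → Matrix (Fin n) (Fin n) ℂ)
    (m : Fin q → ℕ)
    (hcomm : ∀ j, A * P j = P j * A)
    (horth : ∀ j k, P j * P k = if j = k then P j else 0)
    (hsum : ∑ j, P j = (1 : Matrix (Fin n) (Fin n) ℂ))
    (hnil : ∀ j, ((A - lam j • (1 : Matrix (Fin n) (Fin n) ℂ)) * P j) ^ (m j) = 0)
    (s : ℂ) (hs : ∀ j, s ≠ lam j) :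
    (s • (1 : Matrix (Fin n) (Fin n) ℂ) - A)⁻¹
      = ∑ j, ∑ r ∈ Finset.range (m j),
          ((s - lam j) ^ (r + 1))⁻¹ •
            ((A - lam j • (1 : Matrix (Fin n) (Fin n) ℂ)) ^ r * P j) := by
  refine Matrix.inv_eq_right_inv ?_
  rw [mul_sum]
  refine (sum_congr rfl fun j _ => ?_).trans hsum
  have hidem : IsIdempotentElem (P j) := (horth j j).trans (if_pos rfl)
  have hshift : Commute (A - lam j • 1) (P j) :=
    Commute.sub_left (hcomm j) ((Commute.one_left _).smul_left _)
  have hkill : (A - lam j • 1) ^ m j * P j = 0 := by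
    rw [← hidem.mul_pow_mul_self hshift, hnil, zero_mul]
  rw [show s • 1 - A = (s - lam j) • 1 - (A - lam j • 1) by rw [sub_smul]; abel]
  exact sub_mul_sum_inv_pow_smul_pow_mul (sub_ne_zero.2 (hs j)) hkill

theorem resolvent_partial_fraction_expansion {n q : ℕ}
    (A : Matrix (Fin n) (Fin n) ℂ)
    (lam : Fin q → ℂ) (hl : Function.Injective lam)
    (P : Fin q → Matrix (Fin n) (Fin n) ℂ)
    (m : Fin q → ℕ) (hm : ∀ j, 1 ≤ m j)
    (hcomm : ∀ j, A * P j = P j * A)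
    (horth : ∀ j k, P j * P k = if j = k then P j else 0)
    (hsum : ∑ j, P j = (1 : Matrix (Fin n) (Fin n) ℂ))
    (hnil : ∀ j, ((A - lam j • (1 : Matrix (Fin n) (Fin n) ℂ)) * P j) ^ (m j) = 0)
    (hidx : ∀ j, ((A - lam j • (1 : Matrix (Fin n) (Fin n) ℂ)) * P j) ^ (m j - 1) ≠ 0)
    (s : ℂ) (hs : ∀ j, s ≠ lam j) :
    (s • (1 : Matrix (Fin n) (Fin n) ℂ) - A)⁻¹
      = ∑ j, ∑ r ∈ Finset.range (m j),
          ((s - lam j) ^ (r + 1))⁻¹ •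
            ((A - lam j • (1 : Matrix (Fin n) (Fin n) ℂ)) ^ r * P j) :=
  resolvent_partial_fraction_expansion_general A lam P m hcomm horth hsum hnil s hs
end
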